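/- arXiv:1503.00572 — 2 statements merged into one kernel-verified Lean document; each statement's English description precedes it below -/
import Mathlib

section
/- Let C ⊆ V be independent in G and N = |V|. Then the (N-1)-dimensional volume of M(G,C) equals (|Σ(G,C)| / N!) times the volume of the probability simplex Δ(V), where Σ(G,C) is the set of bijections σ : {1,…,N} → V with σ⁻¹(x) < σ⁻¹(y) whenever y ∈ C and x ∼ y. -/
/-!
Sorting its coordinates puts every point of the simplex `Δ(V)` into one of the `N!` order
simplices `{p ∈ Δ(V) : p (σ 0) ≤ ⋯ ≤ p (σ (N-1))}`. These are congruent under permutations of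
the coordinates, and two different ones meet inside the hyperplanes `p a = p b` of `Δ(V)`,
which are `(N-2)`-dimensional and hence null. When sorting a point of `M(G,C)`, ties can be
broken so that the vertices of `C` come last; as `C` is independent, every neighbour of a
vertex `y ∈ C` then comes before `y`. So `M(G,C)` is the union of the order simplices indexed
by `Σ(G,C)`, and the volumes are in the ratio `|Σ(G,C)| : N!`.
-/

open MeasureTheory
open scoped ENNReal

/-- The probability simplex, as a subset of Euclidean space. -/
def probSimplex (V : Type*) [Fintype V] : Set (EuclideanSpace ℝ V) :=
  {p | (∀ v, 0 ≤ p v) ∧ ∑ v, p v = 1}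

/-- The polytope of `C`-modes of a graph `G`, inside the probability simplex. -/
def modePolytope {V : Type*} [Fintype V] (G : SimpleGraph V) (C : Set V) :
    Set (EuclideanSpace ℝ V) :=
  {p | p ∈ probSimplex V ∧ ∀ x ∈ C, ∀ y, G.Adj x y → p y ≤ p x}

open Set Module

theorem hausdorffMeasure_preimage_singleton_eq_zero {E F : Type*} [NormedAddCommGroup E]
    [NormedSpace ℝ E] [FiniteDimensional ℝ E] [MeasurableSpace E] [BorelSpace E]
    [AddCommGroup F] [Module ℝ F] {L : E →ₗ[ℝ] F} (hL : Function.Surjective L) (c : F)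
    {d : ℝ} (hd : (finrank ℝ E : ℝ) - finrank ℝ F < d) : μH[d] (L ⁻¹' {c}) = 0 := by
  rcases (L ⁻¹' {c}).eq_empty_or_nonempty with hempty | hne
  · simp [hempty]
  have hrank : finrank ℝ (LinearMap.ker L) + finrank ℝ F = finrank ℝ E := by
    rw [← LinearMap.finrank_range_add_finrank_ker L, LinearMap.range_eq_top.2 hL, finrank_top,
      add_comm]
  have hspan : vectorSpan ℝ (L ⁻¹' {c}) ≤ LinearMap.ker L := by
    refine Submodule.span_le.2 ?_
    rintro _ ⟨x, hx, y, hy, rfl⟩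
    simp_all [vsub_eq_sub]
  have hker : (finrank ℝ (LinearMap.ker L) : ℝ) < d := by
    rw [← hrank, Nat.cast_add] at hd
    linarith
  lift d to NNReal using (Nat.cast_nonneg _).trans hker.le
  apply hausdorffMeasure_of_dimH_lt
  rw [Real.Convex.dimH_eq_finrank_vectorSpan ((convex_singleton c).linear_preimage L) hne]
  exact (Nat.cast_le.2 (Submodule.finrank_mono hspan)).trans_lt (mod_cast hker)

section OrderSimplex

variable {V : Type*} [Fintype V]

theorem isClosed_probSimplex : IsClosed (probSimplex V) := by
  simp only [probSimplex, ofPred_and, ofPred_forall]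
  exact (isClosed_iInter fun v => isClosed_le continuous_const (by fun_prop)).inter
    (isClosed_eq (by fun_prop) continuous_const)

def orderSimplex (σ : Fin (Fintype.card V) ≃ V) : Set (EuclideanSpace ℝ V) :=
  probSimplex V ∩ {p | Monotone fun i => p (σ i)}

theorem isClosed_orderSimplex (σ : Fin (Fintype.card V) ≃ V) : IsClosed (orderSimplex σ) :=
  isClosed_probSimplex.inter (isClosed_monotone.preimage (by fun_prop))

theorem hausdorffMeasure_orderSimplex_eq (d : ℝ) (σ τ : Fin (Fintype.card V) ≃ V) :
    μH[d] (orderSimplex σ) = μH[d] (orderSimplex τ) := by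
  let T := LinearIsometryEquiv.piLpCongrLeft 2 ℝ ℝ (σ.symm.trans τ)
  have hT : ∀ p v, T p v = p ((σ.symm.trans τ).symm v) := fun _ _ => rfl
  have hpre : orderSimplex σ = T ⁻¹' orderSimplex τ := by
    ext p
    simp only [orderSimplex, probSimplex, mem_inter_iff, mem_ofPred_eq, mem_preimage, hT,
      Equiv.sum_comp]
    simpa using fun _ _ => (τ.symm.trans σ).forall_congr_right.symm
  rw [hpre, T.isometry.hausdorffMeasure_preimage (.inr T.surjective), T.surjective.range_eq,
    inter_univ]

theorem hausdorffMeasure_setOf_sum_eq_one_and_apply_eq {a b : V} (hab : a ≠ b) {d : ℝ}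
    (hd : (Fintype.card V : ℝ) - 2 < d) :
    μH[d] {p : EuclideanSpace ℝ V | ∑ v, p v = 1 ∧ p a = p b} = 0 := by
  classical
  let L : EuclideanSpace ℝ V →ₗ[ℝ] ℝ × ℝ :=
    (∑ v, (EuclideanSpace.proj v).toLinearMap).prod
      ((EuclideanSpace.proj a).toLinearMap - (EuclideanSpace.proj b).toLinearMap)
  have hL : ∀ p, L p = (∑ v, p v, p a - p b) := by simp [L]
  have hsurj : Function.Surjective L := fun st =>
    ⟨EuclideanSpace.single a ((st.1 + st.2) / 2) + EuclideanSpace.single b ((st.1 - st.2) / 2),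
      by ext <;> simp [hL, Finset.sum_add_distrib, hab, hab.symm] <;> ring⟩
  have hset : {p : EuclideanSpace ℝ V | ∑ v, p v = 1 ∧ p a = p b} = L ⁻¹' {(1, 0)} := by
    ext p
    simp [hL, sub_eq_zero]
  rw [hset]
  exact hausdorffMeasure_preimage_singleton_eq_zero hsurj _ (by simpa using hd)

theorem orderSimplex_inter_subset {σ τ : Fin (Fintype.card V) ≃ V} (hστ : σ ≠ τ) :
    orderSimplex σ ∩ orderSimplex τ ⊆
      ⋃ (a) (b) (_ : a ≠ b), {p : EuclideanSpace ℝ V | ∑ v, p v = 1 ∧ p a = p b} := by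
  rintro p ⟨⟨hpΔ, hσ⟩, -, hτ⟩
  obtain ⟨i, hi⟩ : ∃ i, σ i ≠ τ i := by
    by_contra! h
    exact hστ (Equiv.ext h)
  have hcomp : (fun k => p (σ k)) ∘ (τ.trans σ.symm) = fun k => p (τ k) := by
    ext k
    simp
  have huniq := Tuple.unique_monotone (f := fun k => p (σ k)) (σ := τ.trans σ.symm)
    (τ := Equiv.refl _) (hcomp ▸ hτ) hσ
  rw [hcomp] at huniq
  simp only [mem_iUnion]
  exact ⟨σ i, τ i, hi, hpΔ.2, (congrFun huniq i).symm⟩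

theorem hausdorffMeasure_orderSimplex_inter {σ τ : Fin (Fintype.card V) ≃ V} (hστ : σ ≠ τ)
    {d : ℝ} (hd : (Fintype.card V : ℝ) - 2 < d) :
    μH[d] (orderSimplex σ ∩ orderSimplex τ) = 0 :=
  measure_mono_null (orderSimplex_inter_subset hστ) <| measure_iUnion_null fun _ =>
    measure_iUnion_null fun _ => measure_iUnion_null fun hab =>
      hausdorffMeasure_setOf_sum_eq_one_and_apply_eq hab hd

theorem hausdorffMeasure_biUnion_orderSimplex {d : ℝ} (hd : (Fintype.card V : ℝ) - 2 < d)
    (A : Finset (Fin (Fintype.card V) ≃ V)) (σ₀ : Fin (Fintype.card V) ≃ V) :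
    μH[d] (⋃ σ ∈ A, orderSimplex σ) = A.card * μH[d] (orderSimplex σ₀) := by
  rw [measure_biUnion_finset₀ (fun σ _ τ _ hστ => hausdorffMeasure_orderSimplex_inter hστ hd)
      (fun σ _ => (isClosed_orderSimplex σ).measurableSet.nullMeasurableSet),
    Finset.sum_congr rfl fun σ _ => hausdorffMeasure_orderSimplex_eq d σ σ₀, Finset.sum_const,
    nsmul_eq_mul]

theorem exists_monotone_comp_equiv_tiebreak (p : V → ℝ) (C : Set V) :
    ∃ σ : Fin (Fintype.card V) ≃ V, Monotone (p ∘ σ) ∧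
      ∀ x ∉ C, ∀ y ∈ C, p x ≤ p y → σ.symm x < σ.symm y := by
  classical
  -- ties are broken so that the points of `C` come last
  let key : V → ℝ ×ₗ Bool := fun v => toLex (p v, decide (v ∈ C))
  let e := (Fintype.equivFin V).symm
  let σ := (Tuple.sort (key ∘ e)).trans e
  have hkey : Monotone (key ∘ σ) := Tuple.monotone_sort (key ∘ e)
  refine ⟨σ, fun i j hij => Prod.Lex.monotone_fst _ _ (hkey hij), fun x hx y hy hxy => ?_⟩
  have hlt : key x < key y := Prod.Lex.toLex_lt_toLex.2 (by simpa [hx, hy] using hxy.lt_or_eq)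
  by_contra! h
  have hyx := hkey h
  simp only [Function.comp_apply, Equiv.apply_symm_apply] at hyx
  exact hyx.not_gt hlt

theorem probSimplex_eq_iUnion_orderSimplex :
    probSimplex V = ⋃ σ : Fin (Fintype.card V) ≃ V, orderSimplex σ := by
  ext p
  simp only [mem_iUnion, orderSimplex, mem_inter_iff, mem_ofPred_eq, exists_and_left,
    iff_self_and]
  exact fun _ => (exists_monotone_comp_equiv_tiebreak (fun v => p v) ∅).imp fun _ h => h.1

open Classical in
/-- The set `Σ(G, C)` of the statement. -/
noncomputable def modeOrderings (G : SimpleGraph V) (C : Set V) :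
    Finset (Fin (Fintype.card V) ≃ V) :=
  {σ | ∀ x y, y ∈ C → G.Adj x y → σ.symm x < σ.symm y}

theorem modePolytope_eq_biUnion_orderSimplex {G : SimpleGraph V} {C : Set V}
    (hC : ∀ x ∈ C, ∀ y ∈ C, ¬ G.Adj x y) :
    modePolytope G C = ⋃ σ ∈ modeOrderings G C, orderSimplex σ := by
  ext p
  simp only [modePolytope, modeOrderings, mem_iUnion, Finset.mem_filter, Finset.mem_univ,
    true_and, exists_prop, orderSimplex, mem_inter_iff, mem_ofPred_eq]
  constructor
  · rintro ⟨hpΔ, hmode⟩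
    obtain ⟨σ, hmono, hlt⟩ := exists_monotone_comp_equiv_tiebreak (fun v => p v) C
    exact ⟨σ, fun x y hy hxy => hlt x (fun hx => hC y hy x hx hxy.symm) y hy
      (hmode y hy x hxy.symm), hpΔ, hmono⟩
  · rintro ⟨σ, hσ, hpΔ, hmono⟩
    refine ⟨hpΔ, fun x hx y hxy => ?_⟩
    simpa using hmono (hσ y x hx hxy.symm).le

end OrderSimplex

/-- For an independent `C`, the `(|V|-1)`-dimensional volume of the mode polytope is
`|Σ(G,C)| / |V|!` times the volume of the probability simplex, where `Σ(G,C)` is the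
set of orderings `σ` of `V` with `σ⁻¹ x < σ⁻¹ y` whenever `y ∈ C` and `x ∼ y`. -/
theorem volume_modePolytope {V : Type*} [Fintype V]
    (G : SimpleGraph V) (C : Set V)
    (hInd : ∀ x ∈ C, ∀ y ∈ C, ¬ G.Adj x y) :
    μH[((Fintype.card V - 1 : ℕ) : ℝ)] (modePolytope G C) =
      ((Nat.card {σ : Fin (Fintype.card V) ≃ V //
          ∀ x y, y ∈ C → G.Adj x y → σ.symm x < σ.symm y} : ℝ≥0∞) /
        (Nat.factorial (Fintype.card V) : ℝ≥0∞)) *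
      μH[((Fintype.card V - 1 : ℕ) : ℝ)] (probSimplex V) := by
  classical
  have hd : (Fintype.card V : ℝ) - 2 < ((Fintype.card V - 1 : ℕ) : ℝ) := by
    rcases Nat.eq_zero_or_pos (Fintype.card V) with h | h
    · simp [h]
    · rw [Nat.cast_sub h, Nat.cast_one]
      linarith
  have hcard : Nat.card {σ : Fin (Fintype.card V) ≃ V //
      ∀ x y, y ∈ C → G.Adj x y → σ.symm x < σ.symm y} = (modeOrderings G C).card := by
    rw [Nat.card_eq_fintype_card, Fintype.card_subtype]
    rfl
  let σ₀ := (Fintype.equivFin V).symm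
  have hΔ : μH[((Fintype.card V - 1 : ℕ) : ℝ)] (probSimplex V) =
      (Fintype.card V).factorial * μH[((Fintype.card V - 1 : ℕ) : ℝ)] (orderSimplex σ₀) := by
    simpa [← probSimplex_eq_iUnion_orderSimplex, Fintype.card_equiv σ₀] using
      hausdorffMeasure_biUnion_orderSimplex hd Finset.univ σ₀
  rw [modePolytope_eq_biUnion_orderSimplex hInd, hausdorffMeasure_biUnion_orderSimplex hd _ σ₀,
    hΔ, hcard, ← mul_assoc, ENNReal.div_mul_cancel (by positivity) (ENNReal.natCast_ne_top _)]
end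

section
/- Let C ⊆ V be independent in G. Then vol(S(G,C)) = (∏_{x ∈ V} 1/(|N_C(x)| + 1)) · vol(Δ(V)), where N_C(x) = {y ∈ C : y ∼ x} and the volume is the (|V|-1)-dimensional volume in the affine hull of the probability simplex. -/
open MeasureTheory
open scoped ENNReal

/-- The polytope of strong `C`-modes of a graph `G`, inside the probability
simplex. -/
def strongModePolytope {V : Type*} [Fintype V] (G : SimpleGraph V)
    [DecidableRel G.Adj] (C : Set V) : Set (EuclideanSpace ℝ V) :=
  {p | p ∈ probSimplex V ∧ ∀ x ∈ C, ∑ y ∈ G.neighborFinset x, p y ≤ p x}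

/-!
Write `d y = #(C.bipartiteBelow G.Adj y) = |N_C(y)|` and let `M = (1 + N) D`, where `N` is the
adjacency matrix with the rows outside `C` zeroed and `D = diag ((d y + 1)⁻¹)`. Column `y` of `M`
sums to `(1 + d y) / (d y + 1) = 1`, so `p ↦ M p` preserves the coordinate sum. When `C` is
independent, `M` maps the simplex onto the strong mode polytope: on `C` it reads
`(M p) x = p x + ∑_{y ∼ x} (M p) y`, and off `C` it is the scaling `(M p) x = p x / (d x + 1)`.
A linear map acting trivially modulo the hyperplane direction `W = {∑ p = 0}` scales the
`dim W`-dimensional Hausdorff measure of subsets of a translate of `W` by `|det|`, and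
`det M = ∏ (d x + 1)⁻¹` because `1 + N` is unitriangular for the partition `C`, `Cᶜ`.
-/

open Module Finset Matrix

theorem LinearMap.det_restrict_of_forall_sub_mem {K E : Type*} [Field K] [AddCommGroup E]
    [Module K E] [FiniteDimensional K E] (W : Submodule K E) (L : E →ₗ[K] E)
    (hLW : W ≤ W.comap L) (hL : ∀ x, L x - x ∈ W) :
    (L.restrict hLW).det = L.det := by
  have hQ : W.mapQ W L hLW = LinearMap.id := by
    ext x
    simpa [Submodule.Quotient.eq] using hL x
  rw [L.det_eq_det_mul_det W hLW, hQ, LinearMap.det_id, mul_one]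

section

variable {E : Type*} [NormedAddCommGroup E] [NormedSpace ℝ E] [FiniteDimensional ℝ E]
  [MeasurableSpace E] [BorelSpace E]

theorem Submodule.hausdorffMeasure_linearMap_image (W : Submodule ℝ E) {L : E →ₗ[ℝ] E}
    (hLW : W ≤ W.comap L) {A : Set E} (hL : ∀ a ∈ A, L a - a ∈ W)
    (hA : ∀ a ∈ A, ∀ b ∈ A, a - b ∈ W) :
    μH[finrank ℝ W] (L '' A) = ENNReal.ofReal |(L.restrict hLW).det| * μH[finrank ℝ W] A := by
  rcases A.eq_empty_or_nonempty with rfl | ⟨p, hp⟩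
  · simp
  set φ : W → E := fun w => p + w
  have hφ : Isometry φ :=
    (Isometry.of_dist_eq fun a b => dist_add_left p a b).comp isometry_subtype_coe
  have hAφ : A = φ '' (φ ⁻¹' A) := by
    refine (Set.image_preimage_eq_of_subset fun a ha => ⟨⟨a - p, hA a ha p hp⟩, ?_⟩).symm
    simp [φ]
  have hLφ : L ∘ φ = φ ∘ (fun w => ⟨L p - p, hL p hp⟩ + w) ∘ L.restrict hLW := by
    ext w
    simp only [φ, Function.comp_apply, map_add, Submodule.coe_add, LinearMap.coe_restrict_apply]
    abel
  rw [hAφ, ← Set.image_comp, hLφ, Set.image_comp, hφ.hausdorffMeasure_image (Or.inl (by positivity)),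
    hφ.hausdorffMeasure_image (Or.inl (by positivity)), Set.image_comp, Set.image_add_left,
    measure_preimage_add, Measure.addHaar_image_linearMap]

theorem Submodule.hausdorffMeasure_linearMap_image_of_forall_sub_mem (W : Submodule ℝ E)
    {L : E →ₗ[ℝ] E} (hL : ∀ x, L x - x ∈ W) {A : Set E} (hA : ∀ a ∈ A, ∀ b ∈ A, a - b ∈ W) :
    μH[finrank ℝ W] (L '' A) = ENNReal.ofReal |L.det| * μH[finrank ℝ W] A := by
  have hLW : W ≤ W.comap L := fun x hx => by simpa using W.add_mem (hL x) hx
  rw [W.hausdorffMeasure_linearMap_image hLW (fun a _ => hL a) hA,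
    L.det_restrict_of_forall_sub_mem W hLW hL]

end

theorem Matrix.det_eq_prod_diag_of_ne_of_ne_zero {m R : Type*} [Fintype m] [DecidableEq m]
    [CommRing R] (M : Matrix m m R) (p : m → Prop) [DecidablePred p]
    (h : ∀ i j, i ≠ j → M i j ≠ 0 → p i ∧ ¬p j) :
    M.det = ∏ i, M i i := by
  have hdiag : ∀ q : m → Prop, (∀ i j, q i → q j → i ≠ j → M i j = 0) → [DecidablePred q] →
      (M.toSquareBlockProp q).det = ∏ i : {i // q i}, M i i := by
    intro q hq _
    rw [← Matrix.det_diagonal]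
    congr 1
    ext ⟨i, hi⟩ ⟨j, hj⟩
    by_cases hij : i = j
    · subst hij; simp [Matrix.toSquareBlockProp_def]
    · simp [Matrix.toSquareBlockProp_def, hij, hq i j hi hj hij]
  rw [M.twoBlockTriangular_det p, hdiag p, hdiag (¬p ·)]
  · exact Fintype.prod_subtype_mul_prod_subtype p (fun i => M i i)
  · exact fun i j hi _ hij => by_contra fun hM => hi (h i j hij hM).1
  · exact fun i j _ hj hij => by_contra fun hM => (h i j hij hM).2 hj
  · exact fun i hi j hj => by_contra fun hM => hi (h i j (fun e => hi (e ▸ hj)) hM).1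

noncomputable def EuclideanSpace.coordSum (V : Type*) [Fintype V] :
    EuclideanSpace ℝ V →ₗ[ℝ] ℝ where
  toFun p := ∑ x, p x
  map_add' _ _ := sum_add_distrib
  map_smul' _ _ := (mul_sum ..).symm

theorem EuclideanSpace.finrank_ker_coordSum (V : Type*) [Fintype V] :
    finrank ℝ (LinearMap.ker (coordSum V)) = Fintype.card V - 1 := by
  classical
  have h := (coordSum V).finrank_range_add_finrank_ker
  rw [finrank_euclideanSpace] at h
  rcases isEmpty_or_nonempty V with hV | ⟨⟨v⟩⟩
  · rw [Fintype.card_eq_zero] at h ⊢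
    omega
  · have hsurj : Function.Surjective (coordSum V) := fun c =>
      ⟨EuclideanSpace.single v c, by simp [coordSum]⟩
    rw [LinearMap.range_eq_top.2 hsurj, finrank_top, finrank_self] at h
    omega

namespace SimpleGraph

theorem IsIndepSet.notMem_of_adj {V : Type*} {G : SimpleGraph V} {s : Set V}
    (hs : G.IsIndepSet s) {x y : V} (hx : x ∈ s) (hxy : G.Adj x y) : y ∉ s :=
  fun hy => hs hx hy hxy.ne hxy

variable {V : Type*} [Fintype V] [DecidableEq V] (G : SimpleGraph V) [DecidableRel G.Adj]
  (C : Finset V)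

noncomputable def strongModeMatrix : Matrix V V ℝ :=
  (1 + Matrix.diagonal (fun x => if x ∈ C then 1 else 0) * G.adjMatrix ℝ) *
    Matrix.diagonal fun y => ((#(C.bipartiteBelow G.Adj y) : ℝ) + 1)⁻¹

theorem strongModeMatrix_mulVec_apply (p : V → ℝ) (x : V) :
    (G.strongModeMatrix C *ᵥ p) x = ((#(C.bipartiteBelow G.Adj x) : ℝ) + 1)⁻¹ * p x +
      if x ∈ C then ∑ y ∈ G.neighborFinset x, ((#(C.bipartiteBelow G.Adj y) : ℝ) + 1)⁻¹ * p y
      else 0 := by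
  rw [strongModeMatrix, ← mulVec_mulVec, add_mulVec, one_mulVec, ← mulVec_mulVec, Pi.add_apply,
    mulVec_diagonal, mulVec_diagonal, adjMatrix_mulVec_apply]
  simp only [mulVec_diagonal, ite_mul, one_mul, zero_mul]

theorem sum_strongModeMatrix_mulVec (p : V → ℝ) :
    ∑ x, (G.strongModeMatrix C *ᵥ p) x = ∑ x, p x := by
  have hswap (f : V → ℝ) :
      ∑ x ∈ C, ∑ y ∈ G.neighborFinset x, f y = ∑ y, #(C.bipartiteBelow G.Adj y) * f y := by
    calc ∑ x ∈ C, ∑ y ∈ G.neighborFinset x, f y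
        = ∑ y, ∑ _x ∈ C.bipartiteBelow G.Adj y, f y := by
          simp_rw [neighborFinset_eq_filter]
          exact sum_sum_bipartiteAbove_eq_sum_sum_bipartiteBelow _ _
      _ = _ := by simp only [sum_const, nsmul_eq_mul]
  simp_rw [strongModeMatrix_mulVec_apply]
  rw [sum_add_distrib, ← sum_filter, filter_mem_eq_inter, univ_inter, hswap, ← sum_add_distrib]
  refine sum_congr rfl fun y _ => ?_
  have : (#(C.bipartiteBelow G.Adj y) : ℝ) + 1 ≠ 0 := by positivity
  field_simp
  ring

variable {G C}

theorem strongModeMatrix_mulVec_apply_of_notMem (p : V → ℝ) {x : V} (hx : x ∉ C) :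
    (G.strongModeMatrix C *ᵥ p) x = ((#(C.bipartiteBelow G.Adj x) : ℝ) + 1)⁻¹ * p x := by
  simp [strongModeMatrix_mulVec_apply, hx]

theorem IsIndepSet.strongModeMatrix_mulVec_apply_of_mem (hC : G.IsIndepSet C) (p : V → ℝ)
    {x : V} (hx : x ∈ C) :
    (G.strongModeMatrix C *ᵥ p) x =
      p x + ∑ y ∈ G.neighborFinset x, (G.strongModeMatrix C *ᵥ p) y := by
  have hdeg : C.bipartiteBelow G.Adj x = ∅ :=
    filter_eq_empty_iff.2 fun y hy hyx => hC hy hx hyx.ne hyx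
  rw [strongModeMatrix_mulVec_apply, if_pos hx, hdeg, card_empty, Nat.cast_zero, zero_add,
    inv_one, one_mul]
  refine congrArg _ (sum_congr rfl fun y hy => ?_)
  exact (strongModeMatrix_mulVec_apply_of_notMem p
    (hC.notMem_of_adj hx ((mem_neighborFinset _ _ _).1 hy))).symm

theorem IsIndepSet.det_strongModeMatrix (hC : G.IsIndepSet C) :
    (G.strongModeMatrix C).det = ∏ x, ((#(C.bipartiteBelow G.Adj x) : ℝ) + 1)⁻¹ := by
  have hunip : (1 + diagonal (fun x => if x ∈ C then 1 else 0) * G.adjMatrix ℝ).det = 1 := by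
    have hentry (x y : V) :
        (1 + diagonal (fun x => if x ∈ C then 1 else 0) * G.adjMatrix ℝ : Matrix V V ℝ) x y =
          (if x = y then 1 else 0) + (if x ∈ C ∧ G.Adj x y then 1 else 0) := by
      simp only [Matrix.add_apply, one_apply, diagonal_mul, adjMatrix_apply, ite_mul, one_mul,
        zero_mul, ite_and]
    rw [det_eq_prod_diag_of_ne_of_ne_zero _ (· ∈ C)]
    · simp [hentry]
    · intro x y hxy h
      simp only [hentry, if_neg hxy, zero_add, ne_eq, ite_eq_right_iff, Classical.not_imp] at h
      exact ⟨h.1.1, fun hy => hC h.1.1 hy hxy h.1.2⟩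
  rw [strongModeMatrix, det_mul, hunip, det_diagonal, one_mul]

theorem IsIndepSet.mapsTo_strongModeMatrix (hC : G.IsIndepSet C) :
    Set.MapsTo (toEuclideanLin (G.strongModeMatrix C)) (probSimplex V)
      (strongModePolytope G C) := by
  rintro p ⟨hp0, hp1⟩
  simp only [strongModePolytope, probSimplex, Set.mem_ofPred_eq, toLpLin_apply]
  have hout {x : V} (hx : x ∉ C) : 0 ≤ (G.strongModeMatrix C *ᵥ p.ofLp) x := by
    rw [strongModeMatrix_mulVec_apply_of_notMem _ hx]
    exact mul_nonneg (by positivity) (hp0 x)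
  refine ⟨⟨fun x => ?_, (sum_strongModeMatrix_mulVec G C _).trans hp1⟩, fun x hx => ?_⟩
  · by_cases hx : x ∈ C
    · rw [hC.strongModeMatrix_mulVec_apply_of_mem _ hx]
      exact add_nonneg (hp0 x) (sum_nonneg fun y hy =>
        hout (hC.notMem_of_adj hx ((mem_neighborFinset _ _ _).1 hy)))
    · exact hout hx
  · rw [hC.strongModeMatrix_mulVec_apply_of_mem _ hx]
    exact le_add_of_nonneg_left (hp0 x)

theorem IsIndepSet.surjOn_strongModeMatrix (hC : G.IsIndepSet C) :
    Set.SurjOn (toEuclideanLin (G.strongModeMatrix C)) (probSimplex V)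
      (strongModePolytope G C) := by
  rintro r ⟨⟨hr0, hr1⟩, hrC⟩
  set q : EuclideanSpace ℝ V := WithLp.toLp 2 fun x =>
    if x ∈ C then r x - ∑ y ∈ G.neighborFinset x, r y
    else ((#(C.bipartiteBelow G.Adj x) : ℝ) + 1) * r x
  have hout {x : V} (hx : x ∉ C) : (G.strongModeMatrix C *ᵥ q.ofLp) x = r x := by
    rw [strongModeMatrix_mulVec_apply_of_notMem _ hx]
    simp only [q, if_neg hx, ← mul_assoc]
    rw [inv_mul_cancel₀ (by positivity), one_mul]
  have hq : G.strongModeMatrix C *ᵥ q.ofLp = r.ofLp := by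
    ext x
    by_cases hx : x ∈ C
    · rw [hC.strongModeMatrix_mulVec_apply_of_mem _ hx,
        sum_congr rfl fun y hy => hout (hC.notMem_of_adj hx ((mem_neighborFinset _ _ _).1 hy))]
      simp [q, hx]
    · exact hout hx
  refine ⟨q, ⟨fun x => ?_, ?_⟩, congrArg (WithLp.toLp 2) hq⟩
  · by_cases hx : x ∈ C
    · simpa [q, hx] using hrC x hx
    · simpa [q, hx] using mul_nonneg (by positivity) (hr0 x)
  · rw [← sum_strongModeMatrix_mulVec G C, hq, hr1]

end SimpleGraph

/-- For an independent `C`, the `(|V|-1)`-dimensional volume of the strong mode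
polytope is `∏_{x ∈ V} 1/(|N_C(x)| + 1)` times the volume of the probability
simplex, where `N_C(x) = {y ∈ C : y ∼ x}`. -/
theorem volume_strongModePolytope {V : Type*} [Fintype V] [DecidableEq V]
    (G : SimpleGraph V) [DecidableRel G.Adj] (C : Finset V)
    (hInd : ∀ x ∈ C, ∀ y ∈ C, ¬ G.Adj x y) :
    μH[((Fintype.card V - 1 : ℕ) : ℝ)] (strongModePolytope G ↑C) =
      (∏ x : V, ((((C.filter fun y => G.Adj y x).card : ℝ≥0∞) + 1))⁻¹) *
      μH[((Fintype.card V - 1 : ℕ) : ℝ)] (probSimplex V) := by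
  have hC : G.IsIndepSet C := fun x hx y hy _ => hInd x hx y hy
  have hT (p : EuclideanSpace ℝ V) :
      toEuclideanLin (G.strongModeMatrix C) p - p ∈ LinearMap.ker (EuclideanSpace.coordSum V) := by
    simp [EuclideanSpace.coordSum, toLpLin_apply, G.sum_strongModeMatrix_mulVec C]
  have hsimplex : ∀ a ∈ probSimplex V, ∀ b ∈ probSimplex V,
      a - b ∈ LinearMap.ker (EuclideanSpace.coordSum V) := by
    rintro a ⟨-, ha⟩ b ⟨-, hb⟩
    simp [EuclideanSpace.coordSum, sum_sub_distrib, ha, hb]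
  rw [← hC.surjOn_strongModeMatrix.image_eq_of_mapsTo hC.mapsTo_strongModeMatrix,
    ← EuclideanSpace.finrank_ker_coordSum,
    Submodule.hausdorffMeasure_linearMap_image_of_forall_sub_mem _ hT hsimplex,
    LinearMap.det_toLpLin, hC.det_strongModeMatrix, abs_of_nonneg (by positivity),
    ENNReal.ofReal_prod_of_nonneg (fun _ _ => by positivity)]
  congr 1
  refine prod_congr rfl fun x _ => ?_
  rw [ENNReal.ofReal_inv_of_pos (by positivity)]
  norm_cast
end
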